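/- Let K_w ∈ ℝ^{N×N} and K_h ∈ ℝ^{L×L} be symmetric positive semidefinite matrices whose eigenvalues are all at most λ_max > 0, and let B ∈ ℝ^{N×p} and C ∈ ℝ^{L×p}. Then the matrix F = K_w B Cᵀ K_h satisfies ‖F‖_* ≤ (λ_max/2)·( trace(Bᵀ K_w B) + trace(Cᵀ K_h C) ). In particular, if trace(Bᵀ K_w B) + trace(Cᵀ K_h C) ≤ t_B then ‖F‖_* ≤ λ_max·t_B/2. -/

import Mathlib

/-! Write `F = X Yᵀ` with `X = K_w B` and `Y = K_h C`. Taking for `Q` an orthonormal eigenbasis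
of `Fᵀ F` and `P = F Q Σ⁺` (with `Σ` the diagonal of singular values), both `P` and `Q` are partial
isometries and `tr (Pᵀ F Q) = ‖F‖_*`. Hence, in Frobenius norms,
`‖F‖_* = ⟪Xᵀ P, Yᵀ Q⟫ ≤ (‖Xᵀ P‖² + ‖Yᵀ Q‖²) / 2 ≤ (‖X‖² + ‖Y‖²) / 2`,
because compressing a positive semidefinite matrix by a partial isometry cannot increase its trace.
Finally `‖K B‖² = tr (Bᵀ K² B) ≤ λ tr (Bᵀ K B)`, as `λ K - K² = √K (λ - K) √K` is positive
semidefinite. -/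

open Matrix

/-- The nuclear norm of a real `N × L` matrix `F`: the trace of the positive semidefinite
square root of `Fᵀ F` (equivalently, the sum of the singular values of `F`). -/
noncomputable def nuclearNorm {N L : ℕ} (F : Matrix (Fin N) (Fin L) ℝ) : ℝ :=
  (((Matrix.posSemidef_conjTranspose_mul_self F).1.eigenvectorUnitary :
        Matrix (Fin L) (Fin L) ℝ) *
      diagonal (fun i => ((√((Matrix.posSemidef_conjTranspose_mul_self F).1.eigenvalues i) : ℝ) : ℝ)) *
      (star (Matrix.posSemidef_conjTranspose_mul_self F).1.eigenvectorUnitary :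
        Matrix (Fin L) (Fin L) ℝ)).trace

namespace Matrix

variable {m n : Type*} [Fintype m] [Fintype n]

theorem trace_transpose_mul_le (A B : Matrix m n ℝ) :
    (Aᵀ * B).trace ≤ ((Aᵀ * A).trace + (Bᵀ * B).trace) / 2 := by
  have h := (posSemidef_conjTranspose_mul_self (A - B)).trace_nonneg
  have hBA : (Bᵀ * A).trace = (Aᵀ * B).trace := by
    rw [← trace_transpose, transpose_mul, transpose_transpose]
  simp only [conjTranspose_eq_transpose_of_trivial, transpose_sub, Matrix.sub_mul,
    Matrix.mul_sub, trace_sub] at h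
  linarith

theorem PosSemidef.trace_transpose_mul_mul_le [DecidableEq m] {Z : Matrix m m ℝ}
    (hZ : Z.PosSemidef) {P : Matrix m n ℝ} (hP : P * Pᵀ * P = P) :
    (Pᵀ * Z * P).trace ≤ Z.trace := by
  have hRR : P * Pᵀ * (P * Pᵀ) = P * Pᵀ := by rw [← Matrix.mul_assoc, hP]
  set R := P * Pᵀ
  have hRT : (1 - R)ᵀ = 1 - R := by simp [R, transpose_mul]
  have hRidem : (1 - R) * (1 - R) = 1 - R := by
    rw [sub_mul, one_mul, mul_sub, mul_one, hRR, sub_self, sub_zero]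
  have h := (hZ.mul_mul_conjTranspose_same (1 - R)).trace_nonneg
  rw [conjTranspose_eq_transpose_of_trivial, hRT, trace_mul_cycle, hRidem, sub_mul, one_mul,
    trace_sub] at h
  have hPZP : (Pᵀ * Z * P).trace = (R * Z).trace := by rw [trace_mul_cycle]
  linarith

open scoped MatrixOrder in
theorem PosSemidef.trace_transpose_mul_mul_self_mul_le [DecidableEq m] {K : Matrix m m ℝ}
    (hK : K.PosSemidef) {lam : ℝ} (hKlam : (lam • (1 : Matrix m m ℝ) - K).PosSemidef)
    (B : Matrix m n ℝ) :
    (Bᵀ * (K * K) * B).trace ≤ lam * (Bᵀ * K * B).trace := by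
  set S := CFC.sqrt K
  have hSS : S * S = K := CFC.sqrt_mul_sqrt_self K hK.nonneg
  have hS : Sᴴ = S := (CFC.sqrt_nonneg K).posSemidef.1
  have hconj : S * (lam • 1 - K) * Sᴴ = lam • K - K * K := by
    rw [hS, mul_sub, sub_mul, mul_smul_one, smul_mul, hSS, ← hSS]
    simp only [mul_assoc]
  have h :=
    ((hconj ▸ hKlam.mul_mul_conjTranspose_same S).conjTranspose_mul_mul_same B).trace_nonneg
  rw [conjTranspose_eq_transpose_of_trivial, Matrix.mul_sub, Matrix.sub_mul, Matrix.mul_smul,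
    Matrix.smul_mul, trace_sub, trace_smul, smul_eq_mul] at h
  linarith

end Matrix

theorem exists_partialIsometry_trace_eq_nuclearNorm {n l : ℕ} (M : Matrix (Fin n) (Fin l) ℝ) :
    ∃ (P : Matrix (Fin n) (Fin l) ℝ) (Q : Matrix (Fin l) (Fin l) ℝ),
      P * Pᵀ * P = P ∧ Q * Qᵀ * Q = Q ∧ (Pᵀ * M * Q).trace = nuclearNorm M := by
  have hA := posSemidef_conjTranspose_mul_self M
  set U : Matrix (Fin l) (Fin l) ℝ := (hA.1.eigenvectorUnitary : Matrix (Fin l) (Fin l) ℝ)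
  set s : Fin l → ℝ := fun i => √(hA.1.eigenvalues i)
  have hUU : Uᵀ * U = 1 := by
    rw [← conjTranspose_eq_transpose_of_trivial, ← star_eq_conjTranspose]
    exact Unitary.coe_star_mul_self _
  have hUU' : U * Uᵀ = 1 := by
    rw [← conjTranspose_eq_transpose_of_trivial, ← star_eq_conjTranspose]
    exact Unitary.coe_mul_star_self _
  have hdiag : Uᵀ * (Mᵀ * M) * U = diagonal (fun i => s i * s i) := by
    have h := hA.1.conjStarAlgAut_star_eigenvectorUnitary
    rw [Unitary.conjStarAlgAut_star_apply] at h
    simpa [s, Real.mul_self_sqrt (hA.eigenvalues_nonneg _),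
      ← conjTranspose_eq_transpose_of_trivial, ← star_eq_conjTranspose] using h
  have hnorm : nuclearNorm M = ∑ i, s i := by
    show (U * diagonal s * star U).trace = _
    rw [trace_mul_cycle, star_eq_conjTranspose, conjTranspose_eq_transpose_of_trivial, hUU,
      one_mul, trace_diagonal]
  -- `0⁻¹ = 0` makes `D` the pseudo-inverse of `diagonal s`.
  set D := diagonal (fun i => (s i)⁻¹)
  have hD : Dᵀ = D := diagonal_transpose _
  refine ⟨M * U * D, U, ?_, by rw [hUU', one_mul], ?_⟩
  · calc M * U * D * (M * U * D)ᵀ * (M * U * D)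
        = M * U * (D * D * (Uᵀ * (Mᵀ * M) * U) * D) := by
          simp only [transpose_mul, hD, Matrix.mul_assoc]
      _ = M * U * D := by
          rw [hdiag, diagonal_mul_diagonal, diagonal_mul_diagonal, diagonal_mul_diagonal]
          congr 2 with i
          grind
  · calc ((M * U * D)ᵀ * M * U).trace = (D * (Uᵀ * (Mᵀ * M) * U)).trace := by
          simp only [transpose_mul, hD, Matrix.mul_assoc]
      _ = nuclearNorm M := by
          rw [hdiag, diagonal_mul_diagonal, trace_diagonal, hnorm]
          congr 1 with i
          grind

theorem nuclearNorm_mul_transpose_le {n l r : ℕ} (X : Matrix (Fin n) (Fin r) ℝ)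
    (Y : Matrix (Fin l) (Fin r) ℝ) :
    nuclearNorm (X * Yᵀ) ≤ ((Xᵀ * X).trace + (Yᵀ * Y).trace) / 2 := by
  obtain ⟨P, Q, hP, hQ, htr⟩ := exists_partialIsometry_trace_eq_nuclearNorm (X * Yᵀ)
  have hX := (posSemidef_self_mul_conjTranspose X).trace_transpose_mul_mul_le hP
  have hY := (posSemidef_self_mul_conjTranspose Y).trace_transpose_mul_mul_le hQ
  simp only [conjTranspose_eq_transpose_of_trivial] at hX hY
  calc nuclearNorm (X * Yᵀ) = ((Xᵀ * P)ᵀ * (Yᵀ * Q)).trace := by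
        rw [← htr, transpose_mul, transpose_transpose]; simp only [Matrix.mul_assoc]
    _ ≤ (((Xᵀ * P)ᵀ * (Xᵀ * P)).trace + ((Yᵀ * Q)ᵀ * (Yᵀ * Q)).trace) / 2 :=
        trace_transpose_mul_le _ _
    _ = ((Pᵀ * (X * Xᵀ) * P).trace + (Qᵀ * (Y * Yᵀ) * Q).trace) / 2 := by
        simp only [transpose_mul, transpose_transpose, Matrix.mul_assoc]
    _ ≤ ((Xᵀ * X).trace + (Yᵀ * Y).trace) / 2 := by
        rw [trace_mul_comm Xᵀ, trace_mul_comm Yᵀ]; linarith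

/-- Let `K_w ∈ ℝ^{N×N}` and `K_h ∈ ℝ^{L×L}` be symmetric positive semidefinite
kernel matrices whose eigenvalues are all at most `λ_max > 0` (expressed as `λ_max • 1 - K` being
positive semidefinite), and let `B ∈ ℝ^{N×p}`, `C ∈ ℝ^{L×p}`.  Then the matrix
`F = K_w B Cᵀ K_h` satisfies `‖F‖_* ≤ (λ_max/2) (trace(Bᵀ K_w B) + trace(Cᵀ K_h C))`;
in particular, if `trace(Bᵀ K_w B) + trace(Cᵀ K_h C) ≤ t_B` then `‖F‖_* ≤ λ_max t_B / 2`. -/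
theorem nuclearNorm_kernel_factorization_le {N L p : ℕ}
    (Kw : Matrix (Fin N) (Fin N) ℝ) (Kh : Matrix (Fin L) (Fin L) ℝ)
    (hKw : Kw.PosSemidef) (hKh : Kh.PosSemidef)
    (lamMax : ℝ) (hlam : 0 < lamMax)
    (hKwlam : (lamMax • (1 : Matrix (Fin N) (Fin N) ℝ) - Kw).PosSemidef)
    (hKhlam : (lamMax • (1 : Matrix (Fin L) (Fin L) ℝ) - Kh).PosSemidef)
    (B : Matrix (Fin N) (Fin p) ℝ) (C : Matrix (Fin L) (Fin p) ℝ) :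
    nuclearNorm (Kw * B * Cᵀ * Kh) ≤
      lamMax / 2 * ((Bᵀ * Kw * B).trace + (Cᵀ * Kh * C).trace) ∧
    ∀ tB : ℝ, (Bᵀ * Kw * B).trace + (Cᵀ * Kh * C).trace ≤ tB →
      nuclearNorm (Kw * B * Cᵀ * Kh) ≤ lamMax * tB / 2 := by
  have hKwT : Kwᵀ = Kw := by rw [← conjTranspose_eq_transpose_of_trivial, hKw.1]
  have hKhT : Khᵀ = Kh := by rw [← conjTranspose_eq_transpose_of_trivial, hKh.1]
  have hfactor := nuclearNorm_mul_transpose_le (Kw * B) (Kh * C)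
  have hB := hKw.trace_transpose_mul_mul_self_mul_le hKwlam B
  have hC := hKh.trace_transpose_mul_mul_self_mul_le hKhlam C
  simp only [transpose_mul, hKwT, hKhT, Matrix.mul_assoc] at hfactor hB hC ⊢
  have hmain : nuclearNorm (Kw * (B * (Cᵀ * Kh))) ≤
      lamMax / 2 * ((Bᵀ * (Kw * B)).trace + (Cᵀ * (Kh * C)).trace) := by linarith
  exact ⟨hmain, fun tB htB => by nlinarith⟩
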